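/- Let M₀, ..., M_{k−1} be nonnegative supermartingales on binary strings of length at most n, each bounded by 2 on 2^{≤n}, with Σ_j M_j(ε) ≤ 1, and such that the average over σ ∈ 2^n of Σ_j M_j(σ) is at least 1 − ε₀. Let B̃₀, ..., B̃_m ⊆ 2^{≤n} be a sequence of prefix-free sets, each covering all of 2^ω (i.e., [B̃_t] = 2^ω), with B̃_{t+1} refining B̃_t (every element of B̃_{t+1} extends some element of B̃_t). For ρ ∈ B̃_{t}, let B̃_ρ = B̃_{t+1} ∩ [ρ]^⪯. Then Σ_{t<m} Σ_{ρ ∈ B̃_t} 2^{−|ρ|} · Var(M⃗ | B̃_ρ) ≤ C(k)·(1 + m·ε₀), where C(k) = 16k is an admissible constant and Var(M⃗ | B) denotes the conditional variance of the ℝ^k-valued function (M₀,...,M_{k−1}) on the prefix-free set B with respect to the normalized measure μ(·)/μ(B). -/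

import Mathlib

open Finset

noncomputable section

/-- Measure (weight) of a binary string. -/
def wt (σ : List Bool) : ℝ := ((2 : ℝ)⁻¹) ^ σ.length

/-- Measure of a finite set of binary strings. -/
def mea (B : Finset (List Bool)) : ℝ := ∑ σ ∈ B, wt σ

/-- Conditional average of `f` on the set `B` (w.r.t. normalized measure). -/
def condE (f : List Bool → ℝ) (B : Finset (List Bool)) : ℝ :=
  (∑ σ ∈ B, f σ * wt σ) / mea B

/-- Conditional variance of the `ℝ^k`-valued function `M⃗ = (M 0, …, M (k-1))` on `B`. -/
def vVar {k : ℕ} (M : Fin k → List Bool → ℝ) (B : Finset (List Bool)) : ℝ :=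
  (∑ σ ∈ B, (∑ j, (M j σ - condE (M j) B) ^ 2) * wt σ) / mea B

/-- `M` is a (nonnegative) supermartingale on binary strings. -/
def IsSuperM (M : List Bool → ℝ) : Prop :=
  (∀ σ, 0 ≤ M σ) ∧ ∀ σ, M (σ ++ [false]) + M (σ ++ [true]) ≤ 2 * M σ

/-- A set of strings is prefix-free: no element is a proper prefix of another. -/
def PrefixFree (B : Finset (List Bool)) : Prop :=
  ∀ σ ∈ B, ∀ τ ∈ B, σ <+: τ → σ = τ

/-! On each piece `B̃_ρ` the variance of `M_j` is at most the mean square deviation from `M_j(ρ)`.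
The piece has measure exactly `2^{-|ρ|}` (Kraft's inequality plus full covers), so by the
supermartingale property its conditional mean is at most `M_j(ρ) ≤ 2`, and the deviation is at
most the increase of `∑ M_j² 2^{-|σ|}` plus four times the decrease of `∑ M_j 2^{-|σ|}` from
`ρ` to `B̃_ρ`. Summing over `ρ` and `t` telescopes. At the last cover the squared mass is at most
twice the mass; by optional stopping the mass is at most `1` at the first cover and at least
`1 - ε₀` at the last, so the total is at most `2 + 2ε₀`. -/

theorem Fin.sum_succ_sub_castSucc {G : Type*} [AddCommGroup G] {m : ℕ} (f : Fin (m + 1) → G) :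
    ∑ t : Fin m, (f t.succ - f t.castSucc) = f (Fin.last m) - f 0 := by
  induction m with
  | zero => simp
  | succ m ih =>
    have h := ih (fun i => f i.castSucc)
    rw [Fin.sum_univ_castSucc, ← Fin.succ_last]
    simp only [Fin.succ_castSucc, Fin.castSucc_zero] at h ⊢
    rw [h]
    abel

theorem wt_pos (σ : List Bool) : 0 < wt σ := by unfold wt; positivity

@[simp]
theorem wt_nil : wt [] = 1 := by simp [wt]

theorem wt_append_singleton (ρ : List Bool) (b : Bool) : wt (ρ ++ [b]) = wt ρ / 2 := by
  simp [wt, pow_succ, div_eq_mul_inv]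

theorem PrefixFree.subset {B C : Finset (List Bool)} (hC : PrefixFree C) (h : B ⊆ C) :
    PrefixFree B :=
  fun σ hσ τ hτ => hC σ (h hσ) τ (h hτ)

theorem PrefixFree.of_length_eq {B : Finset (List Bool)} {n : ℕ}
    (h : ∀ σ ∈ B, σ.length = n) : PrefixFree B :=
  fun σ hσ τ hτ hστ => hστ.eq_of_length ((h σ hσ).trans (h τ hτ).symm)

theorem List.exists_append_singleton_prefix {ρ σ : List Bool} (h : ρ <+: σ) (hne : ρ ≠ σ) :
    ∃ b, ρ ++ [b] <+: σ := by
  obtain ⟨_ | ⟨b, r⟩, rfl⟩ := h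
  · simp at hne
  · exact ⟨b, r, by simp⟩

theorem sum_sum_filter_isPrefix {β : Type*} [AddCommMonoid β] {P C : Finset (List Bool)}
    (hP : PrefixFree P) (hC : ∀ σ ∈ C, ∃ ρ ∈ P, ρ <+: σ) (g : List Bool → β) :
    ∑ ρ ∈ P, ∑ σ ∈ C.filter (ρ <+: ·), g σ = ∑ σ ∈ C, g σ := by
  have hdisj : (P : Set (List Bool)).PairwiseDisjoint (fun ρ => C.filter (ρ <+: ·)) := by
    intro ρ hρ ρ' hρ' hne
    refine disjoint_left.2 fun σ hσ hσ' => hne ?_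
    rcases List.prefix_or_prefix_of_prefix (mem_filter.1 hσ).2 (mem_filter.1 hσ').2 with h | h
    · exact hP ρ hρ ρ' hρ' h
    · exact (hP ρ' hρ' ρ hρ h).symm
  rw [← sum_biUnion hdisj]
  congr 1
  ext σ
  simp only [mem_biUnion, mem_filter]
  exact ⟨fun ⟨_, _, hσ, _⟩ => hσ, fun hσ => (hC σ hσ).imp fun ρ ⟨hρ, h⟩ => ⟨hρ, hσ, h⟩⟩

theorem IsSuperM.sum {ι : Type*} {M : ι → List Bool → ℝ} (s : Finset ι)
    (hM : ∀ j ∈ s, IsSuperM (M j)) : IsSuperM fun σ => ∑ j ∈ s, M j σ := by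
  refine ⟨fun σ => sum_nonneg fun j hj => (hM j hj).1 σ, fun σ => ?_⟩
  rw [← sum_add_distrib, mul_sum]
  exact sum_le_sum fun j hj => (hM j hj).2 σ

theorem IsSuperM.sum_mul_wt_le {M : List Bool → ℝ} (hM : IsSuperM M) {ρ : List Bool}
    {B : Finset (List Bool)} (hB : PrefixFree B) (hext : ∀ σ ∈ B, ρ <+: σ) :
    ∑ σ ∈ B, M σ * wt σ ≤ M ρ * wt ρ := by
  obtain ⟨d, hd⟩ : ∃ d, ∀ σ ∈ B, σ.length < ρ.length + d :=
    ⟨B.sup List.length + 1, fun σ hσ => by have := le_sup (f := List.length) hσ; omega⟩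
  induction d generalizing ρ B with
  | zero =>
    have hempty : B = ∅ := eq_empty_of_forall_notMem fun σ hσ => by
      have := (hext σ hσ).length_le; have := hd σ hσ; omega
    simpa [hempty] using mul_nonneg (hM.1 ρ) (wt_pos ρ).le
  | succ d ih =>
    by_cases hρ : ρ ∈ B
    · rw [eq_singleton_iff_unique_mem.2 ⟨hρ, fun σ hσ => (hB ρ hρ σ hσ (hext σ hσ)).symm⟩,
        sum_singleton]
    have hchildren : PrefixFree {ρ ++ [false], ρ ++ [true]} :=
      PrefixFree.of_length_eq (n := ρ.length + 1) (by simp)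
    have hcover : ∀ σ ∈ B, ∃ τ ∈ ({ρ ++ [false], ρ ++ [true]} : Finset _), τ <+: σ := by
      intro σ hσ
      obtain ⟨b, hb⟩ := List.exists_append_singleton_prefix (hext σ hσ) fun h => hρ (h ▸ hσ)
      cases b <;> simp [hb]
    have hchild : ∀ b, ∑ σ ∈ B.filter (ρ ++ [b] <+: ·), M σ * wt σ ≤
        M (ρ ++ [b]) * wt (ρ ++ [b]) :=
      fun b => ih (hB.subset (filter_subset _ _)) (fun σ hσ => (mem_filter.1 hσ).2)
        fun σ hσ => by
          have := hd σ (mem_filter.1 hσ).1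
          simp only [List.length_append, List.length_cons, List.length_nil]
          omega
    rw [← sum_sum_filter_isPrefix hchildren hcover, sum_pair (by simp)]
    calc _ ≤ M (ρ ++ [false]) * wt (ρ ++ [false]) + M (ρ ++ [true]) * wt (ρ ++ [true]) :=
          add_le_add (hchild false) (hchild true)
      _ = (M (ρ ++ [false]) + M (ρ ++ [true])) * (wt ρ / 2) := by
          rw [wt_append_singleton, wt_append_singleton]; ring
      _ ≤ 2 * M ρ * (wt ρ / 2) := by have := wt_pos ρ; gcongr; exact hM.2 ρ
      _ = M ρ * wt ρ := by ring

theorem mea_le_wt {ρ : List Bool} {B : Finset (List Bool)} (hB : PrefixFree B)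
    (hext : ∀ σ ∈ B, ρ <+: σ) : mea B ≤ wt ρ := by
  have hone : IsSuperM fun _ => 1 := ⟨fun _ => zero_le_one, fun _ => by norm_num⟩
  simpa [mea] using hone.sum_mul_wt_le hB hext

theorem exists_prefix_mem_of_mea_eq_one {B : Finset (List Bool)} (hB : PrefixFree B)
    (hmea : mea B = 1) {τ : List Bool} (hτ : ∀ σ ∈ B, σ.length ≤ τ.length) :
    ∃ ρ ∈ B, ρ <+: τ := by
  by_contra! h
  have hτB : τ ∉ B := fun hτ' => h τ hτ' (List.prefix_refl τ)
  have hpf : PrefixFree (insert τ B) := by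
    intro σ hσ σ' hσ' hpre
    rw [mem_insert] at hσ hσ'
    rcases hσ with rfl | hσ <;> rcases hσ' with rfl | hσ'
    · rfl
    · exact absurd (hpre.eq_of_length (le_antisymm hpre.length_le (hτ σ' hσ')) ▸ hσ') hτB
    · exact absurd hpre (h σ hσ)
    · exact hB σ hσ σ' hσ' hpre
  have := mea_le_wt hpf fun σ _ => List.nil_prefix
  rw [mea, sum_insert hτB, ← mea, hmea, wt_nil] at this
  linarith [wt_pos τ]

theorem mea_filter_isPrefix_eq_wt {P C : Finset (List Bool)} (hP : PrefixFree P)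
    (hC : PrefixFree C) (href : ∀ σ ∈ C, ∃ ρ ∈ P, ρ <+: σ) (hmea : mea C = mea P) :
    ∀ ρ ∈ P, mea (C.filter (ρ <+: ·)) = wt ρ := by
  refine (sum_eq_sum_iff_of_le fun ρ _ =>
    mea_le_wt (hC.subset (filter_subset _ _)) fun σ hσ => (mem_filter.1 hσ).2).1 ?_
  exact (sum_sum_filter_isPrefix hP href wt).trans hmea

theorem IsSuperM.avg_level_le {M : List Bool → ℝ} (hM : IsSuperM M) {B : Finset (List Bool)}
    {n : ℕ} (hB : PrefixFree B) (hlen : ∀ σ ∈ B, σ.length ≤ n) (hmea : mea B = 1) :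
    (1 / 2 ^ n : ℝ) * ∑ f : Fin n → Bool, M (List.ofFn f) ≤ ∑ σ ∈ B, M σ * wt σ := by
  set L := (univ : Finset (Fin n → Bool)).image List.ofFn
  have hL : ∀ σ ∈ L, σ.length = n := by simp [L]
  have hLB : ∀ σ ∈ L, ∃ ρ ∈ B, ρ <+: σ := fun σ hσ =>
    exists_prefix_mem_of_mea_eq_one hB hmea fun ρ hρ => (hlen ρ hρ).trans (hL σ hσ).ge
  calc (1 / 2 ^ n : ℝ) * ∑ f : Fin n → Bool, M (List.ofFn f) = ∑ σ ∈ L, M σ * wt σ := by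
        rw [sum_image List.ofFn_injective.injOn, mul_sum]
        simp [wt, mul_comm]
    _ = ∑ ρ ∈ B, ∑ σ ∈ L.filter (ρ <+: ·), M σ * wt σ := (sum_sum_filter_isPrefix hB hLB _).symm
    _ ≤ ∑ ρ ∈ B, M ρ * wt ρ := sum_le_sum fun ρ _ =>
        hM.sum_mul_wt_le ((PrefixFree.of_length_eq hL).subset (filter_subset _ _))
          fun σ hσ => (mem_filter.1 hσ).2

theorem sum_sq_sub_mul_eq {ι : Type*} (s : Finset ι) (w a : ι → ℝ) (x : ℝ) :
    ∑ i ∈ s, (a i - x) ^ 2 * w i =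
      ∑ i ∈ s, a i ^ 2 * w i - 2 * x * ∑ i ∈ s, a i * w i + x ^ 2 * ∑ i ∈ s, w i := by
  rw [mul_sum, mul_sum, ← sum_sub_distrib, ← sum_add_distrib]
  exact sum_congr rfl fun i _ => by ring

theorem sum_sq_sub_weighted_mean_le {ι : Type*} (s : Finset ι) (w a : ι → ℝ)
    (hw : 0 < ∑ i ∈ s, w i) (c : ℝ) :
    ∑ i ∈ s, (a i - (∑ i ∈ s, a i * w i) / ∑ i ∈ s, w i) ^ 2 * w i ≤
      ∑ i ∈ s, (a i - c) ^ 2 * w i := by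
  set e := (∑ i ∈ s, a i * w i) / ∑ i ∈ s, w i
  have he : ∑ i ∈ s, a i * w i = e * ∑ i ∈ s, w i := (div_mul_cancel₀ _ hw.ne').symm
  rw [sum_sq_sub_mul_eq, sum_sq_sub_mul_eq, he]
  nlinarith [mul_nonneg (sq_nonneg (c - e)) hw.le]

theorem sum_sq_sub_condE_le {S : Finset (List Bool)} {f : List Bool → ℝ} {c K : ℝ}
    (hS : 0 < mea S) (hc : c ≤ K) (hdrift : ∑ σ ∈ S, f σ * wt σ ≤ c * mea S) :
    ∑ σ ∈ S, (f σ - condE f S) ^ 2 * wt σ ≤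
      ∑ σ ∈ S, f σ ^ 2 * wt σ - c ^ 2 * mea S + 2 * K * (c * mea S - ∑ σ ∈ S, f σ * wt σ) := by
  refine (sum_sq_sub_weighted_mean_le S wt f hS c).trans ?_
  rw [sum_sq_sub_mul_eq, ← mea]
  nlinarith [mul_nonneg (sub_nonneg.2 hc) (sub_nonneg.2 hdrift)]

def sqMass {k : ℕ} (M : Fin k → List Bool → ℝ) (B : Finset (List Bool)) : ℝ :=
  ∑ σ ∈ B, (∑ j, M j σ ^ 2) * wt σ

def mass {k : ℕ} (M : Fin k → List Bool → ℝ) (B : Finset (List Bool)) : ℝ :=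
  ∑ σ ∈ B, (∑ j, M j σ) * wt σ

section VectorSupermartingale

variable {k : ℕ} {M : Fin k → List Bool → ℝ} {K : ℝ}

theorem wt_mul_vVar_le (hM : ∀ j, IsSuperM (M j)) {ρ : List Bool} (hK : ∀ j, M j ρ ≤ K)
    {S : Finset (List Bool)} (hS : PrefixFree S) (hext : ∀ σ ∈ S, ρ <+: σ)
    (hmea : mea S = wt ρ) :
    wt ρ * vVar M S ≤
      sqMass M S - (∑ j, M j ρ ^ 2) * wt ρ + 2 * K * ((∑ j, M j ρ) * wt ρ - mass M S) := by
  have hvar : wt ρ * vVar M S = ∑ j, ∑ σ ∈ S, (M j σ - condE (M j) S) ^ 2 * wt σ := by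
    rw [vVar, hmea, mul_div_cancel₀ _ (wt_pos ρ).ne']
    simp_rw [sum_mul]
    exact sum_comm
  have hcomp : ∀ j, ∑ σ ∈ S, (M j σ - condE (M j) S) ^ 2 * wt σ ≤
      ∑ σ ∈ S, M j σ ^ 2 * wt σ - M j ρ ^ 2 * wt ρ +
        2 * K * (M j ρ * wt ρ - ∑ σ ∈ S, M j σ * wt σ) := fun j => by
    have := sum_sq_sub_condE_le (hmea ▸ wt_pos ρ) (hK j) (hmea ▸ (hM j).sum_mul_wt_le hS hext)
    rwa [hmea] at this
  rw [hvar]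
  refine (sum_le_sum fun j _ => hcomp j).trans_eq ?_
  simp only [sqMass, mass, sum_add_distrib, sum_sub_distrib, ← mul_sum, sum_mul]
  rw [sum_comm (s := S), sum_comm (s := S)]

theorem sum_wt_mul_vVar_le (hM : ∀ j, IsSuperM (M j)) {P C : Finset (List Bool)}
    (hK : ∀ j, ∀ ρ ∈ P, M j ρ ≤ K) (hP : PrefixFree P) (hC : PrefixFree C)
    (href : ∀ σ ∈ C, ∃ ρ ∈ P, ρ <+: σ) (hmea : mea C = mea P) :
    ∑ ρ ∈ P, wt ρ * vVar M (C.filter (ρ <+: ·)) ≤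
      sqMass M C - sqMass M P + 2 * K * (mass M P - mass M C) := by
  have hpiece := mea_filter_isPrefix_eq_wt hP hC href hmea
  calc _ ≤ ∑ ρ ∈ P, (sqMass M (C.filter (ρ <+: ·)) - (∑ j, M j ρ ^ 2) * wt ρ +
          2 * K * ((∑ j, M j ρ) * wt ρ - mass M (C.filter (ρ <+: ·)))) :=
        sum_le_sum fun ρ hρ => wt_mul_vVar_le hM (fun j => hK j ρ hρ)
          (hC.subset (filter_subset _ _)) (fun σ hσ => (mem_filter.1 hσ).2) (hpiece ρ hρ)
    _ = _ := by
        simp only [sum_add_distrib, sum_sub_distrib, ← mul_sum, sqMass, mass,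
          sum_sum_filter_isPrefix hP href]

theorem sum_sum_wt_mul_vVar_le (hM : ∀ j, IsSuperM (M j)) {m : ℕ}
    {B : Fin (m + 1) → Finset (List Bool)} (hK : ∀ j t, ∀ ρ ∈ B t, M j ρ ≤ K)
    (hpf : ∀ t, PrefixFree (B t)) (hmea : ∀ t : Fin m, mea (B t.succ) = mea (B t.castSucc))
    (hrefine : ∀ t : Fin m, ∀ σ ∈ B t.succ, ∃ ρ ∈ B t.castSucc, ρ <+: σ) :
    ∑ t : Fin m, ∑ ρ ∈ B t.castSucc, wt ρ * vVar M ((B t.succ).filter (ρ <+: ·)) ≤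
      sqMass M (B (Fin.last m)) - sqMass M (B 0) +
        2 * K * (mass M (B 0) - mass M (B (Fin.last m))) := by
  refine (sum_le_sum fun t _ => sum_wt_mul_vVar_le hM (fun j => hK j t.castSucc) (hpf _) (hpf _)
    (hrefine t) (hmea t)).trans_eq ?_
  have hmass : ∑ t : Fin m, (mass M (B t.castSucc) - mass M (B t.succ)) =
      mass M (B 0) - mass M (B (Fin.last m)) := by
    have := Fin.sum_succ_sub_castSucc fun t => mass M (B t)
    rw [sum_sub_distrib] at this ⊢
    linarith
  rw [sum_add_distrib, ← mul_sum, hmass, Fin.sum_succ_sub_castSucc fun t => sqMass M (B t)]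

theorem sqMass_le_mul_mass {B : Finset (List Bool)} (h0 : ∀ j, ∀ σ ∈ B, 0 ≤ M j σ)
    (hK : ∀ j, ∀ σ ∈ B, M j σ ≤ K) : sqMass M B ≤ K * mass M B := by
  rw [sqMass, mass, mul_sum]
  refine sum_le_sum fun σ hσ => ?_
  rw [← mul_assoc, mul_sum]
  have := wt_pos σ
  gcongr with j
  nlinarith [h0 j σ hσ, hK j σ hσ]

end VectorSupermartingale

/-- Claim 2.15: the total averaged conditional variance of a tuple of bounded
supermartingales along a refining sequence of prefix-free covers is `O(k)(1 + mε₀)`. -/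
theorem variance_sum_bound (k n m : ℕ) (M : Fin k → List Bool → ℝ)
    (hSM : ∀ j, IsSuperM (M j))
    (hbd : ∀ j σ, σ.length ≤ n → M j σ ≤ 2)
    (hroot : ∑ j, M j ([] : List Bool) ≤ 1)
    (ε0 : ℝ) (hε0 : 0 ≤ ε0)
    (havg : 1 - ε0 ≤ (1 / 2 ^ n : ℝ) * ∑ f : Fin n → Bool, ∑ j, M j (List.ofFn f))
    (B : Fin (m + 1) → Finset (List Bool))
    (hlen : ∀ t, ∀ ρ ∈ B t, ρ.length ≤ n)
    (hpf : ∀ t, PrefixFree (B t))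
    (hcover : ∀ t, mea (B t) = 1)
    (hrefine : ∀ t : Fin m, ∀ σ ∈ B t.succ, ∃ ρ ∈ B t.castSucc, ρ <+: σ) :
    ∑ t : Fin m, ∑ ρ ∈ B t.castSucc,
        wt ρ * vVar M ((B t.succ).filter (fun σ => ρ <+: σ)) ≤
      (16 * k : ℝ) * (1 + m * ε0) := by
  rcases Nat.eq_zero_or_pos k with rfl | hk
  · simp [vVar]
  rcases Nat.eq_zero_or_pos m with rfl | hm
  · simp
  have hK : ∀ j t, ∀ ρ ∈ B t, M j ρ ≤ 2 := fun j t ρ hρ => hbd j ρ (hlen t ρ hρ)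
  have hN := IsSuperM.sum univ fun j _ => hSM j
  have hchain := sum_sum_wt_mul_vVar_le hSM hK hpf (fun t => by rw [hcover, hcover]) hrefine
  have hsq0 : 0 ≤ sqMass M (B 0) :=
    sum_nonneg fun σ _ => mul_nonneg (sum_nonneg fun j _ => sq_nonneg _) (wt_pos σ).le
  have hsqlast : sqMass M (B (Fin.last m)) ≤ 2 * mass M (B (Fin.last m)) :=
    sqMass_le_mul_mass (fun j σ _ => (hSM j).1 σ) (hK · _)
  have hmass0 : mass M (B 0) ≤ 1 := by
    have := hN.sum_mul_wt_le (hpf 0) fun σ _ => List.nil_prefix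
    rw [wt_nil, mul_one] at this
    exact this.trans hroot
  have hmasslast : 1 - ε0 ≤ mass M (B (Fin.last m)) :=
    havg.trans (hN.avg_level_le (hpf _) (hlen _) (hcover _))
  have hk1 : (1 : ℝ) ≤ k := by exact_mod_cast hk
  have hm1 : (1 : ℝ) ≤ m := by exact_mod_cast hm
  calc _ ≤ 2 + 2 * ε0 := by linarith
    _ ≤ 16 * k * (1 + m * ε0) := by
        nlinarith [mul_le_mul_of_nonneg_right hm1 hε0, mul_nonneg (sub_nonneg.2 hk1) hε0]

end
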